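/- Let E be a finite measure space, (a_k) a sequence of measurable functions converging almost everywhere to a, with |a_k| ≤ C uniformly, and (b_k) a sequence converging weakly in L²(E) to b. Then a_k·b_k converges weakly in L²(E) to a·b. -/

import Mathlib

/-!
Split `∫ a_k b_k φ = ⟪b_k, a φ⟫ + ⟪b_k, (a_k - a) φ⟫`. The first term converges by the weak
convergence of `b_k`. A weakly convergent sequence is bounded (Banach–Steinhaus), and
`(a_k - a) φ → 0` strongly in `L²` by dominated convergence with dominating function `2 C |φ|`,
so the second term tends to `0`.
-/

open MeasureTheory Filter Topology
open scoped ENNReal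

section WeakStrongInner

variable {𝕜 H : Type*} [RCLike 𝕜] [NormedAddCommGroup H] [InnerProductSpace 𝕜 H] [CompleteSpace H]

theorem exists_norm_le_of_forall_tendsto_inner {x : ℕ → H} {ℓ : H → 𝕜}
    (hx : ∀ z, Tendsto (fun k => inner 𝕜 (x k) z) atTop (𝓝 (ℓ z))) : ∃ M, ∀ k, ‖x k‖ ≤ M := by
  obtain ⟨M, hM⟩ := banach_steinhaus (g := fun k => innerSL 𝕜 (x k)) fun z =>
    (hx z).norm.bddAbove_range.imp fun _ hM k => hM ⟨k, rfl⟩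
  exact ⟨M, fun k => by simpa [innerSL_apply_norm] using hM k⟩

theorem tendsto_inner_of_forall_tendsto_inner_of_tendsto {x y : ℕ → H} {y₀ : H} {ℓ : H → 𝕜}
    (hx : ∀ z, Tendsto (fun k => inner 𝕜 (x k) z) atTop (𝓝 (ℓ z)))
    (hy : Tendsto y atTop (𝓝 y₀)) :
    Tendsto (fun k => inner 𝕜 (x k) (y k)) atTop (𝓝 (ℓ y₀)) := by
  obtain ⟨M, hM⟩ := exists_norm_le_of_forall_tendsto_inner hx
  have hdiff : Tendsto (fun k => inner 𝕜 (x k) (y k - y₀)) atTop (𝓝 0) := by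
    refine squeeze_zero_norm (fun k => ?_) <| by
      simpa using (tendsto_iff_norm_sub_tendsto_zero.1 hy).const_mul M
    calc ‖inner 𝕜 (x k) (y k - y₀)‖ ≤ ‖x k‖ * ‖y k - y₀‖ := norm_inner_le_norm _ _
      _ ≤ M * ‖y k - y₀‖ := by gcongr; exact hM k
  simpa [inner_sub_right] using hdiff.add (hx y₀)

end WeakStrongInner

theorem tendsto_eLpNorm_zero_of_dominated {α E : Type*} [MeasurableSpace α] {μ : Measure α}
    [NormedAddCommGroup E] {p : ℝ≥0∞} (hp0 : p ≠ 0) (hp : p ≠ ∞) {F : ℕ → α → E} {g : α → ℝ}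
    (hF : ∀ n, AEStronglyMeasurable (F n) μ) (hg : MemLp g p μ)
    (hbound : ∀ n, ∀ᵐ x ∂μ, ‖F n x‖ ≤ g x)
    (hlim : ∀ᵐ x ∂μ, Tendsto (fun n => F n x) atTop (𝓝 0)) :
    Tendsto (fun n => eLpNorm (F n) p μ) atTop (𝓝 0) := by
  have hp_pos : 0 < p.toReal := ENNReal.toReal_pos hp0 hp
  have hrpow_zero {r : ℝ} (hr : 0 < r) : Tendsto (fun t : ℝ≥0∞ => t ^ r) (𝓝 0) (𝓝 0) := by
    simpa [ENNReal.zero_rpow_of_pos hr] using (ENNReal.continuous_rpow_const (y := r)).tendsto 0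
  have henorm : Tendsto (fun y : E => ‖y‖ₑ) (𝓝 0) (𝓝 0) := by
    simpa using continuous_enorm.tendsto (0 : E)
  have hint : Tendsto (fun n => ∫⁻ x, ‖F n x‖ₑ ^ p.toReal ∂μ) atTop (𝓝 0) := by
    have h := tendsto_lintegral_of_dominated_convergence' (f := 0) (fun x => ‖g x‖ₑ ^ p.toReal)
      (fun n => (hF n).enorm.pow_const p.toReal)
      (fun n => (hbound n).mono fun x hx => by
        simp only
        gcongr
        exact enorm_le_iff_norm_le.2 (hx.trans (Real.le_norm_self _)))
      (lintegral_rpow_enorm_lt_top_of_eLpNorm_lt_top hp0 hp hg.eLpNorm_lt_top).ne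
      (hlim.mono fun x hx => (hrpow_zero hp_pos).comp (henorm.comp hx))
    simpa using h
  simp_rw [eLpNorm_eq_lintegral_rpow_enorm_toReal hp0 hp]
  exact (hrpow_zero (one_div_pos.2 hp_pos)).comp hint

theorem tendsto_eLpNorm_mul_sub_mul_of_tendsto_ae {α 𝕜 : Type*} [MeasurableSpace α]
    {μ : Measure α} [NormedRing 𝕜] {p : ℝ≥0∞} (hp0 : p ≠ 0) (hp : p ≠ ∞)
    {a : ℕ → α → 𝕜} {alim φ : α → 𝕜} {C : ℝ} (ha_meas : ∀ k, AEStronglyMeasurable (a k) μ)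
    (halim_meas : AEStronglyMeasurable alim μ) (ha_bound : ∀ k, ∀ᵐ x ∂μ, ‖a k x‖ ≤ C)
    (halim_bound : ∀ᵐ x ∂μ, ‖alim x‖ ≤ C)
    (ha_ae : ∀ᵐ x ∂μ, Tendsto (fun k => a k x) atTop (𝓝 (alim x))) (hφ : MemLp φ p μ) :
    Tendsto (fun k => eLpNorm (fun x => a k x * φ x - alim x * φ x) p μ) atTop (𝓝 0) := by
  refine tendsto_eLpNorm_zero_of_dominated hp0 hp
    (fun k => ((ha_meas k).mul hφ.1).sub (halim_meas.mul hφ.1)) (hφ.norm.const_mul (2 * C))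
    (fun k => ?_) ?_
  · filter_upwards [ha_bound k, halim_bound] with x hak halim
    calc ‖a k x * φ x - alim x * φ x‖ ≤ ‖a k x - alim x‖ * ‖φ x‖ := by
          rw [← sub_mul]; exact norm_mul_le _ _
      _ ≤ 2 * C * ‖φ x‖ := by
          gcongr
          linarith [norm_sub_le (a k x) (alim x)]
  · filter_upwards [ha_ae] with x hx
    simpa [← sub_mul] using (hx.sub_const (alim x)).mul_const (φ x)

theorem MemLp.inner_toLp_eq_integral_mul {α : Type*} [MeasurableSpace α] {μ : Measure α}
    {f g : α → ℝ} (hf : MemLp f 2 μ) (hg : MemLp g 2 μ) :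
    inner ℝ (hf.toLp f) (hg.toLp g) = ∫ x, f x * g x ∂μ := by
  rw [L2.inner_def]
  refine integral_congr_ae ?_
  filter_upwards [hf.coeFn_toLp, hg.coeFn_toLp] with x hfx hgx
  simp [hfx, hgx, mul_comm]

theorem product_weak_L2_convergence_general
    {E : Type*} [MeasurableSpace E] (μ : Measure E)
    (a : ℕ → E → ℝ) (alim : E → ℝ) (b : ℕ → E → ℝ) (blim : E → ℝ) (C : ℝ)
    (ha_meas : ∀ k, Measurable (a k))
    (hb_mem : ∀ k, MemLp (b k) 2 μ)
    (ha_bound : ∀ k, ∀ x, |a k x| ≤ C)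
    (ha_ae : ∀ᵐ x ∂μ, Tendsto (fun k => a k x) atTop (nhds (alim x)))
    (hb_weak : ∀ φ : E → ℝ, MemLp φ 2 μ →
      Tendsto (fun k => ∫ x, b k x * φ x ∂μ) atTop (nhds (∫ x, blim x * φ x ∂μ))) :
    ∀ φ : E → ℝ, MemLp φ 2 μ →
      Tendsto (fun k => ∫ x, a k x * b k x * φ x ∂μ) atTop
        (nhds (∫ x, alim x * blim x * φ x ∂μ)) := by
  intro φ hφ
  have ha_meas' (k : ℕ) : AEStronglyMeasurable (a k) μ := (ha_meas k).aestronglyMeasurable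
  have halim_meas : AEStronglyMeasurable alim μ :=
    aestronglyMeasurable_of_tendsto_ae atTop ha_meas' ha_ae
  have halim_bound : ∀ᵐ x ∂μ, |alim x| ≤ C :=
    ha_ae.mono fun x hx => le_of_tendsto' hx.abs fun k => ha_bound k x
  have haφ (k : ℕ) : MemLp (fun x => a k x * φ x) 2 μ :=
    hφ.mul' (memLp_top_of_bound (ha_meas' k) C (ae_of_all _ (ha_bound k)))
  have halimφ : MemLp (fun x => alim x * φ x) 2 μ :=
    hφ.mul' (memLp_top_of_bound halim_meas C halim_bound)
  have hstrong : Tendsto (fun k => (haφ k).toLp _) atTop (𝓝 (halimφ.toLp _)) :=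
    (Lp.tendsto_Lp_iff_tendsto_eLpNorm'' _ haφ _ halimφ).2 <|
      tendsto_eLpNorm_mul_sub_mul_of_tendsto_ae two_ne_zero ENNReal.ofNat_ne_top ha_meas'
        halim_meas (fun k => ae_of_all _ (ha_bound k)) halim_bound ha_ae hφ
  have hweak (z : Lp ℝ 2 μ) : Tendsto (fun k => inner ℝ ((hb_mem k).toLp (b k)) z) atTop
      (𝓝 (∫ x, blim x * z x ∂μ)) := by
    refine (hb_weak z (Lp.memLp z)).congr fun k => ?_
    simpa only [Lp.toLp_coeFn] using
      (MemLp.inner_toLp_eq_integral_mul (hb_mem k) (Lp.memLp z)).symm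
  convert tendsto_inner_of_forall_tendsto_inner_of_tendsto hweak hstrong using 1
  · ext k
    rw [MemLp.inner_toLp_eq_integral_mul (hb_mem k) (haφ k)]
    congr 1
    ext x
    ring
  · refine congrArg _ (integral_congr_ae ?_)
    filter_upwards [halimφ.coeFn_toLp] with x hx
    rw [hx]
    ring

theorem product_weak_L2_convergence
    {E : Type*} [MeasurableSpace E] (μ : Measure E) [IsFiniteMeasure μ]
    (a : ℕ → E → ℝ) (alim : E → ℝ) (b : ℕ → E → ℝ) (blim : E → ℝ) (C : ℝ)
    (ha_meas : ∀ k, Measurable (a k)) (halim_meas : Measurable alim)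
    (hb_mem : ∀ k, MemLp (b k) 2 μ) (hblim_mem : MemLp blim 2 μ)
    (ha_bound : ∀ k, ∀ x, |a k x| ≤ C)
    (ha_ae : ∀ᵐ x ∂μ, Tendsto (fun k => a k x) atTop (nhds (alim x)))
    (hb_weak : ∀ φ : E → ℝ, MemLp φ 2 μ →
      Tendsto (fun k => ∫ x, b k x * φ x ∂μ) atTop (nhds (∫ x, blim x * φ x ∂μ))) :
    ∀ φ : E → ℝ, MemLp φ 2 μ →
      Tendsto (fun k => ∫ x, a k x * b k x * φ x ∂μ) atTop
        (nhds (∫ x, alim x * blim x * φ x ∂μ)) :=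
  product_weak_L2_convergence_general μ a alim b blim C ha_meas hb_mem ha_bound ha_ae hb_weak
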